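/- arXiv:1703.06480 — 8 statements merged into one kernel-verified Lean document; each statement's English description precedes it below -/
import Mathlib

section
/- Let A and B be disjoint nonempty analytic subsets of the Cantor space 2^ω, and suppose A is monotone. Then there exists a positive (hence Borel) set C ⊆ 2^ω such that A ⊆ C and C ∩ B = ∅. -/
/-!
Write `A = f(ℕ^ℕ)` and `B = g(ℕ^ℕ)` with `f`, `g` continuous. As `A` is monotone and disjoint
from `B`, no `g β` lies above `f α`: some coordinate `N` has `f α N = 1` and `g β N = 0`, and by
continuity `U_N` separates the images of small cylinders around `α` and `β`. Positive separability
is preserved by countable unions on both sides (separate by `⋃ₘ ⋂ₙ`), so if the ranges were not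
positively separable, splitting cylinders one coordinate at a time would give nested pairs of
non-separable cylinders shrinking to a pair `(α, β)`, contradicting the local separation there.
-/

open MeasureTheory

/-- The Cantor space `2^ω` of functions `ℕ → {0,1}`. -/
abbrev CantorSpace := ℕ → Bool

/-- `A ⊆ 2^ω` is *positive* if it belongs to the least family of subsets of `2^ω`
which contains the sets `U n = {x : x n = 1}` (`n ∈ ℕ`) and is closed under
countable unions and countable intersections. -/
inductive IsPositive : Set CantorSpace → Prop
  | basic (n : ℕ) : IsPositive {x | x n = true}
  | iUnion (f : ℕ → Set CantorSpace) : (∀ n, IsPositive (f n)) → IsPositive (⋃ n, f n)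
  | iInter (f : ℕ → Set CantorSpace) : (∀ n, IsPositive (f n)) → IsPositive (⋂ n, f n)

/-- `A ⊆ 2^ω` is *monotone* if `x ∈ A` and `x ⊆ y` (pointwise) imply `y ∈ A`. -/
def IsMonotoneSet (A : Set CantorSpace) : Prop :=
  ∀ x y : CantorSpace, x ∈ A → (∀ n, x n = true → y n = true) → y ∈ A

open Set Function PiNat

namespace PiNat

variable {E : ℕ → Type*}

theorem comp_mem_cylinder {α β : Type*} (φ : α → β) {x y : ℕ → α} {n : ℕ}
    (h : y ∈ cylinder x n) : φ ∘ y ∈ cylinder (φ ∘ x) n :=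
  mem_cylinder_iff.2 fun i hi => congrArg φ (mem_cylinder_iff.1 h i hi)

theorem exists_forall_of_exists_mem_cylinder_succ (P : ℕ → (∀ n, E n) → Prop)
    (hP : ∀ n x y, y ∈ cylinder x n → P n x → P n y) {x₀ : ∀ n, E n} (h₀ : P 0 x₀)
    (step : ∀ n x, P n x → ∃ y ∈ cylinder x n, P (n + 1) y) : ∃ x, ∀ n, P n x := by
  choose! next hnext_mem hnext using step
  let u : ℕ → ∀ n, E n := fun k => Nat.rec x₀ (fun n y => next n y) k
  have hu : ∀ n, P n (u n) := fun n => by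
    induction n with
    | zero => exact h₀
    | succ n ih => exact hnext n (u n) ih
  have hu_mem : ∀ n m, n ≤ m → u m ∈ cylinder (u n) n := by
    intro n m hnm
    induction m, hnm using Nat.le_induction with
    | base => exact self_mem_cylinder _ _
    | succ m hnm ih =>
      rw [← mem_cylinder_iff_eq.1 ih]
      exact cylinder_anti _ hnm (hnext_mem m (u m) (hu m))
  refine ⟨fun i => u (i + 1) i, fun n => hP n (u n) _ ?_ (hu n)⟩
  exact mem_cylinder_iff.2 fun i hi =>
    (mem_cylinder_iff.1 (hu_mem (i + 1) n hi) i i.lt_succ_self).symm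

/-- The scheme of the proof of Lusin's separation theorem (Kechris, *Classical Descriptive Set
Theory*, 14.7). -/
theorem rel_range_of_rel_image_cylinder {α β : Type*} (S : Set α → Set β → Prop)
    (hS : ∀ (s : ℕ → Set α) (t : ℕ → Set β),
      (∀ m n, S (s m) (t n)) → S (⋃ m, s m) (⋃ n, t n))
    {f : (ℕ → ℕ) → α} {g : (ℕ → ℕ) → β}
    (hloc : ∀ x y, ∃ n, S (f '' cylinder x n) (g '' cylinder y n)) : S (range f) (range g) := by
  by_contra hfg
  let P : ℕ → (ℕ → ℕ × ℕ) → Prop := fun n z =>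
    ¬S (f '' cylinder (Prod.fst ∘ z) n) (g '' cylinder (Prod.snd ∘ z) n)
  have hP : ∀ n z w, w ∈ cylinder z n → P n z → P n w := by
    intro n z w hw
    simp only [P, mem_cylinder_iff_eq.1 (comp_mem_cylinder Prod.fst hw),
      mem_cylinder_iff_eq.1 (comp_mem_cylinder Prod.snd hw), imp_self]
  have h₀ : P 0 fun _ => (0, 0) := by simpa only [P, cylinder_zero, image_univ] using hfg
  have step : ∀ n z, P n z → ∃ w ∈ cylinder z n, P (n + 1) w := by
    intro n z hz
    by_contra! hsucc
    refine hz ?_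
    rw [← iUnion_cylinder_update, ← iUnion_cylinder_update, image_iUnion, image_iUnion]
    refine hS _ _ fun i j => ?_
    simpa only [P, comp_update, not_not] using
      hsucc (update z n (i, j)) (update_mem_cylinder _ _ _)
  obtain ⟨z, hz⟩ := exists_forall_of_exists_mem_cylinder_succ P hP h₀ step
  obtain ⟨n, hn⟩ := hloc (Prod.fst ∘ z) (Prod.snd ∘ z)
  exact hz n hn

theorem exists_cylinder_subset [∀ n, TopologicalSpace (E n)] [∀ n, DiscreteTopology (E n)]
    {U : Set (∀ n, E n)} (hU : IsOpen U) {x : ∀ n, E n} (hx : x ∈ U) :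
    ∃ n, cylinder x n ⊆ U := by
  obtain ⟨_, ⟨y, n, rfl⟩, hxy, hyU⟩ :=
    (isTopologicalBasis_cylinders E).exists_subset_of_mem_open hx hU
  exact ⟨n, (mem_cylinder_iff_eq.1 hxy).symm ▸ hyU⟩

end PiNat

theorem IsPositive.measurableSet {C : Set CantorSpace} (h : IsPositive C) : MeasurableSet C := by
  induction h with
  | basic n => exact measurableSet_eq_fun (measurable_pi_apply n) measurable_const
  | iUnion f _ ih => exact .iUnion ih
  | iInter f _ ih => exact .iInter ih

def PositivelySeparable (s t : Set CantorSpace) : Prop :=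
  ∃ u, s ⊆ u ∧ Disjoint t u ∧ IsPositive u

theorem PositivelySeparable.iUnion {s t : ℕ → Set CantorSpace}
    (h : ∀ m n, PositivelySeparable (s m) (t n)) :
    PositivelySeparable (⋃ m, s m) (⋃ n, t n) := by
  choose u hsu htu hu using h
  refine ⟨⋃ m, ⋂ n, u m n, ?_, ?_, .iUnion _ fun m => .iInter _ fun n => hu m n⟩
  · exact iUnion_mono fun m => subset_iInter (hsu m)
  · simp_rw [disjoint_iUnion_left, disjoint_iUnion_right]
    exact fun n m => (htu m n).mono_right (iInter_subset _ n)

theorem exists_positivelySeparable_image_cylinder {f g : (ℕ → ℕ) → CantorSpace}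
    (hf : Continuous f) (hg : Continuous g) {x y : ℕ → ℕ} {N : ℕ}
    (hx : f x N = true) (hy : g y N = false) :
    ∃ n, PositivelySeparable (f '' cylinder x n) (g '' cylinder y n) := by
  have isOpen_eq (b : Bool) : IsOpen {z : CantorSpace | z N = b} :=
    (isOpen_discrete {b}).preimage (continuous_apply N : Continuous fun z : CantorSpace => z N)
  obtain ⟨n₁, hn₁⟩ := exists_cylinder_subset ((isOpen_eq true).preimage hf) hx
  obtain ⟨n₂, hn₂⟩ := exists_cylinder_subset ((isOpen_eq false).preimage hg) hy
  refine ⟨max n₁ n₂, {z | z N = true}, ?_, ?_, .basic N⟩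
  · exact image_subset_iff.2 ((cylinder_anti _ (le_max_left _ _)).trans hn₁)
  · rw [disjoint_left]
    rintro _ ⟨w, hw, rfl⟩
    have hw' : g w N = false := hn₂ (cylinder_anti _ (le_max_right _ _) hw)
    simp [hw']

theorem IsMonotoneSet.exists_true_false {A B : Set CantorSpace} (hA : IsMonotoneSet A)
    (hAB : Disjoint A B) {a b : CantorSpace} (ha : a ∈ A) (hb : b ∈ B) :
    ∃ N, a N = true ∧ b N = false := by
  by_contra! h
  exact disjoint_left.1 hAB (hA a b ha fun n hn => Bool.not_eq_false _ ▸ h n hn) hb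

/-- **Dyck separation**: disjoint nonempty analytic `A, B ⊆ 2^ω` with `A` monotone can be
separated by a positive (hence Borel) set. -/
theorem dyck_separation (A B : Set CantorSpace)
    (hA : AnalyticSet A) (hB : AnalyticSet B)
    (hAne : A.Nonempty) (hBne : B.Nonempty)
    (hdisj : A ∩ B = ∅) (hmono : IsMonotoneSet A) :
    ∃ C : Set CantorSpace, IsPositive C ∧ MeasurableSet C ∧ A ⊆ C ∧ C ∩ B = ∅ := by
  rw [AnalyticSet] at hA hB
  obtain ⟨f, hf, rfl⟩ := hA.resolve_left hAne.ne_empty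
  obtain ⟨g, hg, rfl⟩ := hB.resolve_left hBne.ne_empty
  have hsep : PositivelySeparable (range f) (range g) := by
    refine rel_range_of_rel_image_cylinder _ (fun _ _ => PositivelySeparable.iUnion) fun x y => ?_
    obtain ⟨N, hx, hy⟩ := hmono.exists_true_false (disjoint_iff_inter_eq_empty.2 hdisj)
      (mem_range_self x) (mem_range_self y)
    exact exists_positivelySeparable_image_cylinder hf hg hx hy
  obtain ⟨C, hfC, hgC, hC⟩ := hsep
  exact ⟨C, hC, hC.measurableSet, hfC, disjoint_iff_inter_eq_empty.1 hgC.symm⟩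
end

section
/- A Borel subset A of the Cantor space 2^ω with A ≠ ∅ and A ≠ 2^ω is monotone if and only if it is positive. -/
/-!
Positive sets are monotone by induction. Conversely, a monotone Borel set `A ≠ ∅, 2^ω` and its
complement are continuous images `range f`, `range g` of the Baire space, and monotonicity gives,
for all `u v`, a coordinate `n` with `f u n = 1` and `g v n = 0`, so that the clopen set `U_n`
separates `f` near `u` from `g` near `v`. Lusin's separation argument, which only uses closure
under countable unions and intersections, then produces a positive set separating `A` from its
complement, i.e. `A` itself.
-/

open Set Filter Topology PiNat

namespace PiNat

variable {E F : ℕ → Type*}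

theorem exists_cylinder_subset_of_mem_nhds [∀ n, TopologicalSpace (E n)]
    [∀ n, DiscreteTopology (E n)] {x : ∀ n, E n} {s : Set (∀ n, E n)} (hs : s ∈ 𝓝 x) :
    ∃ n, cylinder x n ⊆ s := by
  obtain ⟨_, ⟨y, n, rfl⟩, hxy, hys⟩ := (isTopologicalBasis_cylinders E).mem_nhds_iff.1 hs
  exact ⟨n, mem_cylinder_iff_eq.1 hxy ▸ hys⟩

theorem cylinder_diag_eq_of_nested {x : ℕ → ∀ n, E n} (hx : ∀ n, x (n + 1) ∈ cylinder (x n) n)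
    (n : ℕ) : cylinder (fun i => x (i + 1) i) n = cylinder (x n) n := by
  have hmem : ∀ m k, k ≤ m → x m ∈ cylinder (x k) k := by
    intro m k hkm
    induction m, hkm using Nat.le_induction with
    | base => exact self_mem_cylinder _ _
    | succ m hkm ih => exact mem_cylinder_iff_eq.1 ih ▸ cylinder_anti _ hkm (hx m)
  rw [← mem_cylinder_iff_eq]
  exact fun i hi => (hmem n (i + 1) hi i i.lt_succ_self).symm

theorem exists_forall_cylinder_of_step {p : Set (∀ n, E n) → Set (∀ n, F n) → Prop}
    {x₀ : ∀ n, E n} {y₀ : ∀ n, F n} (h₀ : p (cylinder x₀ 0) (cylinder y₀ 0))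
    (hstep : ∀ x y n, p (cylinder x n) (cylinder y n) →
      ∃ x' ∈ cylinder x n, ∃ y' ∈ cylinder y n, p (cylinder x' (n + 1)) (cylinder y' (n + 1))) :
    ∃ x y, ∀ n, p (cylinder x n) (cylinder y n) := by
  have : Nonempty (∀ n, E n) := ⟨x₀⟩
  have : Nonempty (∀ n, F n) := ⟨y₀⟩
  choose! nx hnx ny hny hp using hstep
  let s : ℕ → (∀ n, E n) × (∀ n, F n) :=
    fun n => Nat.rec (x₀, y₀) (fun n xy => (nx xy.1 xy.2 n, ny xy.1 xy.2 n)) n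
  have hs : ∀ n, p (cylinder (s n).1 n) (cylinder (s n).2 n) := by
    intro n
    induction n with
    | zero => exact h₀
    | succ n ih => exact hp _ _ _ ih
  refine ⟨fun i => (s (i + 1)).1 i, fun i => (s (i + 1)).2 i, fun n => ?_⟩
  rw [cylinder_diag_eq_of_nested (fun n => hnx _ _ _ (hs n)),
    cylinder_diag_eq_of_nested (fun n => hny _ _ _ (hs n))]
  exact hs n

end PiNat

section Separation

variable {X : Type*}

def SeparableBy (p : Set X → Prop) (s t : Set X) : Prop :=
  ∃ P, p P ∧ s ⊆ P ∧ Disjoint P t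

variable {p : Set X → Prop}

theorem SeparableBy.of_compl {s : Set X} (h : SeparableBy p s sᶜ) : p s := by
  obtain ⟨P, hP, hsP, hPs⟩ := h
  rwa [← hsP.antisymm (disjoint_compl_right_iff_subset.1 hPs)] at hP

theorem SeparableBy.iUnion (hU : ∀ u : ℕ → Set X, (∀ n, p (u n)) → p (⋃ n, u n))
    (hI : ∀ u : ℕ → Set X, (∀ n, p (u n)) → p (⋂ n, u n))
    {s t : ℕ → Set X} (h : ∀ i j, SeparableBy p (s i) (t j)) :
    SeparableBy p (⋃ i, s i) (⋃ j, t j) := by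
  choose P hP hsP hPt using h
  refine ⟨⋃ i, ⋂ j, P i j, hU _ fun i => hI _ fun j => hP i j,
    iUnion_mono fun i => subset_iInter fun j => hsP i j, ?_⟩
  exact disjoint_iUnion_left.2 fun i => disjoint_iUnion_right.2 fun j =>
    (hPt i j).mono_left (iInter_subset _ j)

/-- Lusin's separation theorem, for any family of sets closed under countable unions and
intersections in place of the Borel sets. -/
theorem separableBy_range_of_forall_mem_nhds
    (hU : ∀ u : ℕ → Set X, (∀ n, p (u n)) → p (⋃ n, u n))
    (hI : ∀ u : ℕ → Set X, (∀ n, p (u n)) → p (⋂ n, u n))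
    {f g : (ℕ → ℕ) → X}
    (hsep : ∀ x y, ∃ P, p P ∧ f ⁻¹' P ∈ 𝓝 x ∧ g ⁻¹' Pᶜ ∈ 𝓝 y) :
    SeparableBy p (range f) (range g) := by
  by_contra hfg
  obtain ⟨x, y, hxy⟩ :
      ∃ x y, ∀ n, ¬SeparableBy p (f '' cylinder x n) (g '' cylinder y n) := by
    refine exists_forall_cylinder_of_step (p := fun S T => ¬SeparableBy p (f '' S) (g '' T))
      (x₀ := 0) (y₀ := 0) (by simpa using hfg) ?_
    intro x y n hxy
    contrapose! hxy
    rw [← iUnion_cylinder_update x n, ← iUnion_cylinder_update y n, image_iUnion, image_iUnion]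
    exact SeparableBy.iUnion hU hI fun i j =>
      hxy _ (update_mem_cylinder _ _ _) _ (update_mem_cylinder _ _ _)
  obtain ⟨P, hP, hfP, hgP⟩ := hsep x y
  obtain ⟨m, hm⟩ := exists_cylinder_subset_of_mem_nhds hfP
  obtain ⟨k, hk⟩ := exists_cylinder_subset_of_mem_nhds hgP
  refine hxy (max m k) ⟨P, hP, ?_, ?_⟩
  · exact image_subset_iff.2 ((cylinder_anti _ (le_max_left m k)).trans hm)
  · exact (subset_compl_iff_disjoint_right.1
      (image_subset_iff.2 ((cylinder_anti _ (le_max_right m k)).trans hk))).symm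

end Separation

theorem MeasureTheory.AnalyticSet.exists_continuous_range_eq {α : Type*} [TopologicalSpace α]
    {s : Set α} (hs : AnalyticSet s) (hne : s ≠ ∅) :
    ∃ f : (ℕ → ℕ) → α, Continuous f ∧ range f = s := by
  rw [AnalyticSet] at hs
  exact hs.resolve_left hne

theorem IsPositive.isMonotoneSet {A : Set CantorSpace} (h : IsPositive A) : IsMonotoneSet A := by
  induction h with
  | basic n => exact fun x y hx hxy => hxy n hx
  | iUnion f _ ih =>
    intro x y hx hxy
    obtain ⟨i, hi⟩ := mem_iUnion.1 hx
    exact mem_iUnion.2 ⟨i, ih i x y hi hxy⟩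
  | iInter f _ ih =>
    exact fun x y hx hxy => mem_iInter.2 fun i => ih i x y (mem_iInter.1 hx i) hxy

theorem IsMonotoneSet.exists_eq_true_and_eq_false {A : Set CantorSpace} (hA : IsMonotoneSet A)
    {x y : CantorSpace} (hx : x ∈ A) (hy : y ∉ A) : ∃ n, x n = true ∧ y n = false := by
  by_contra! h
  exact hy (hA x y hx fun n hn => Bool.not_eq_false _ |>.mp (h n hn))

theorem isClopen_setOf_apply_eq_true (n : ℕ) : IsClopen {x : CantorSpace | x n = true} :=
  (isClopen_discrete {true}).preimage (continuous_apply n)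

/-- A Borel subset of `2^ω` different from `∅` and `2^ω` is monotone exactly when
it is positive. -/
theorem borel_monotone_iff_positive (A : Set CantorSpace)
    (hBorel : MeasurableSet A) (hne : A ≠ ∅) (hnuniv : A ≠ Set.univ) :
    IsMonotoneSet A ↔ IsPositive A := by
  refine ⟨fun hA => ?_, IsPositive.isMonotoneSet⟩
  -- instance search does not find the generic `PolishSpace` instance for `ℕ → Bool`
  have : PolishSpace CantorSpace := {}
  obtain ⟨f, hf, hfA⟩ := hBorel.analyticSet.exists_continuous_range_eq hne
  obtain ⟨g, hg, hgA⟩ :=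
    hBorel.compl.analyticSet.exists_continuous_range_eq (mt compl_empty_iff.1 hnuniv)
  suffices SeparableBy IsPositive (range f) (range g) by
    rw [hfA, hgA] at this
    exact this.of_compl
  refine separableBy_range_of_forall_mem_nhds IsPositive.iUnion IsPositive.iInter fun x y => ?_
  obtain ⟨n, hfx, hgy⟩ := hA.exists_eq_true_and_eq_false (hfA ▸ mem_range_self x)
    (hgA ▸ mem_range_self y : g y ∈ Aᶜ)
  have hU := isClopen_setOf_apply_eq_true n
  exact ⟨_, .basic n, hf.continuousAt.preimage_mem_nhds (hU.isOpen.mem_nhds hfx),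
    hg.continuousAt.preimage_mem_nhds (hU.compl.isOpen.mem_nhds (by simp [hgy]))⟩
end

section
/- There exists a monotone analytic subset A of the Cantor space 2^ω which is Σ¹₁-complete: for every zero-dimensional Polish space Z and every analytic set P ⊆ Z there is a continuous function f : Z → 2^ω with P = f⁻¹[A]. -/
open MeasureTheory

/-- A topological space is *zero-dimensional* if it has a basis of clopen sets. -/
def ZeroDimensional (Z : Type*) [TopologicalSpace Z] : Prop :=
  ∃ b : Set (Set Z), (∀ s ∈ b, IsClopen s) ∧ TopologicalSpace.IsTopologicalBasis b

/-! Given `P = range g` with `g : (ℕ → ℕ) → Z` continuous, fix clopen covers `U j` of `Z` of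
mesh `→ 0`. The point `z` is sent to the set of finite sequences of pairs `(a_j, i_j)` such that
`z ∈ U j (i j)` and this piece meets `g` of the cylinder of `a_0, …, a_j`. If `z = g a`, the pieces
around `z` give an infinite such sequence; conversely, an infinite one yields `g c_j → z` with
`c_j → a`, so `z = g a`. -/

open Set Filter Topology TopologicalSpace

def initSeg (b : ℕ → ℕ) (n : ℕ) : List ℕ :=
  List.ofFn fun i : Fin n => b i

theorem getD_initSeg {b : ℕ → ℕ} {n j : ℕ} (hj : j < n) : (initSeg b n).getD j 0 = b j := by
  simp [initSeg, hj]

theorem continuous_initSeg (n : ℕ) : Continuous fun b : ℕ → ℕ => initSeg b n :=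
  continuous_of_discreteTopology.comp (continuous_pi fun i : Fin n => continuous_apply (i : ℕ))

/-- Read `x` as a set of finite sequences of naturals, coded by `Encodable.encode`: `x` is in
`branchSet` iff it contains every initial segment of some infinite sequence. Not asking `x` to be
a tree (closed under initial segments) is what makes the set monotone. -/
def branchSet : Set CantorSpace :=
  {x | ∃ b : ℕ → ℕ, ∀ n, x (Encodable.encode (initSeg b n)) = true}

theorem isMonotoneSet_branchSet : IsMonotoneSet branchSet := by
  rintro x y ⟨b, hb⟩ hxy
  exact ⟨b, fun n => hxy _ (hb n)⟩

theorem analyticSet_branchSet : AnalyticSet branchSet := by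
  have heval : Continuous fun p : CantorSpace × ℕ => p.1 p.2 :=
    continuous_prod_of_discrete_right.2 continuous_apply
  have hclosed : IsClosed
      {p : CantorSpace × (ℕ → ℕ) | ∀ n, p.1 (Encodable.encode (initSeg p.2 n)) = true} := by
    simp only [ofPred_forall]
    refine isClosed_iInter fun n => isClosed_eq ?_ continuous_const
    exact heval.comp (continuous_fst.prodMk
      (continuous_of_discreteTopology.comp ((continuous_initSeg n).comp continuous_snd)))
  have himage : branchSet = Prod.fst '' {p : CantorSpace × (ℕ → ℕ) |
      ∀ n, p.1 (Encodable.encode (initSeg p.2 n)) = true} := by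
    ext x
    exact ⟨fun ⟨b, hb⟩ => ⟨(x, b), hb, rfl⟩, fun ⟨⟨_, b⟩, hb, hx⟩ => hx ▸ ⟨b, hb⟩⟩
  rw [himage]
  -- needed for instance search to reach `PolishSpace (CantorSpace × (ℕ → ℕ))`
  have : PolishSpace Bool := inferInstance
  exact hclosed.analyticSet.image_of_continuous continuous_fst

/-- Coordinate `encode l` of `f z` records whether `z ∈ C b j` for all `j < l.length`, where `b`
extends `l`. -/
theorem exists_continuous_reduction_to_branchSet {Z : Type*} [TopologicalSpace Z]
    (C : (ℕ → ℕ) → ℕ → Set Z) (hC : ∀ b j, IsClopen (C b j))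
    (hCcongr : ∀ b b' j, (∀ m ≤ j, b m = b' m) → C b j = C b' j) :
    ∃ f : Z → CantorSpace, Continuous f ∧ ∀ z, f z ∈ branchSet ↔ ∃ b, ∀ j, z ∈ C b j := by
  let W : List ℕ → Set Z := fun l => ⋂ j ∈ Finset.range l.length, C (fun m => l.getD m 0) j
  have hW : ∀ b n, W (initSeg b n) = ⋂ j ∈ Finset.range n, C b j := by
    intro b n
    simp only [W, initSeg, List.length_ofFn]
    refine iInter₂_congr fun j hj => hCcongr _ _ _ fun m hm => ?_
    exact getD_initSeg (hm.trans_lt (Finset.mem_range.1 hj))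
  let f : Z → CantorSpace := fun z k => ((Encodable.decode k).elim ∅ W).boolIndicator z
  have hf : ∀ z b n, f z (Encodable.encode (initSeg b n)) = true ↔ ∀ j < n, z ∈ C b j := by
    intro z b n
    simp [f, ← mem_iff_boolIndicator, hW]
  refine ⟨f, continuous_pi fun k => (continuous_boolIndicator_iff_isClopen _).2 ?_, fun z => ?_⟩
  · cases Encodable.decode (α := List ℕ) k
    · exact isClopen_empty
    · exact isClopen_biInter_finset fun j _ => hC _ j
  · simp only [branchSet, mem_ofPred_eq, hf]
    exact exists_congr fun b => ⟨fun h j => h (j + 1) j j.lt_succ_self, fun h n j _ => h j⟩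

theorem exists_clopen_cover_of_dist_le {Z : Type*} [PseudoMetricSpace Z]
    [SecondCountableTopology Z] (hZ : ZeroDimensional Z) {ε : ℝ} (hε : 0 < ε) :
    ∃ V : ℕ → Set Z, (∀ i, IsClopen (V i)) ∧ (∀ z, ∃ i, z ∈ V i) ∧
      ∀ i, ∀ w ∈ V i, ∀ w' ∈ V i, dist w w' ≤ ε := by
  obtain ⟨bb, hbb, hbasis⟩ := hZ
  let S := {s ∈ bb | ∀ w ∈ s, ∀ w' ∈ s, dist w w' ≤ ε}
  obtain ⟨T, hTc, hTS, hTU⟩ := isOpen_sUnion_countable S fun s hs => (hbb s hs.1).isOpen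
  obtain ⟨V, hV⟩ := (hTc.insert ∅).exists_eq_range (insert_nonempty _ _)
  have hVT : ∀ i, V i = ∅ ∨ V i ∈ S := fun i =>
    (mem_insert_iff.1 (hV ▸ mem_range_self i)).imp_right (hTS ·)
  have hSU : ∀ z, z ∈ ⋃₀ S := by
    intro z
    obtain ⟨s, hsbb, hzs, hs⟩ :=
      hbasis.exists_subset_of_mem_open (Metric.mem_ball_self (half_pos hε)) Metric.isOpen_ball
    refine ⟨s, ⟨hsbb, fun w hw w' hw' => ?_⟩, hzs⟩
    have hwz := Metric.mem_ball.1 (hs hw)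
    have hzw' := Metric.mem_ball'.1 (hs hw')
    linarith [dist_triangle w z w']
  refine ⟨V, fun i => ?_, fun z => ?_, fun i => ?_⟩
  · rcases hVT i with h | h
    · exact h ▸ isClopen_empty
    · exact hbb _ h.1
  · obtain ⟨t, htT, hzt⟩ := hTU ▸ hSU z
    obtain ⟨i, hi⟩ := hV ▸ mem_insert_of_mem ∅ htT
    exact ⟨i, hi ▸ hzt⟩
  · rcases hVT i with h | h
    · simp [h]
    · exact h.2

section Cells

variable {Z : Type*} (g : (ℕ → ℕ) → Z) (U : ℕ → ℕ → Set Z)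

open Classical in
/-- `b` codes two sequences, `a j = (b j).unpair.1` and `i j = (b j).unpair.2`: `a` is a candidate
`g`-preimage and `U j (i j)` a piece of the `j`-th cover. The cell is that piece, kept only if it
meets the `g`-image of the cylinder of `a` of length `j + 1`. -/
def schemeCell (b : ℕ → ℕ) (j : ℕ) : Set Z :=
  if (U j (b j).unpair.2 ∩ g '' {c | ∀ m ≤ j, c m = (b m).unpair.1}).Nonempty then
    U j (b j).unpair.2
  else ∅

variable {g U}

theorem isClopen_schemeCell [TopologicalSpace Z] (hU : ∀ j i, IsClopen (U j i))
    (b : ℕ → ℕ) (j : ℕ) : IsClopen (schemeCell g U b j) := by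
  unfold schemeCell
  split_ifs
  exacts [hU _ _, isClopen_empty]

theorem schemeCell_congr {b b' : ℕ → ℕ} {j : ℕ} (h : ∀ m ≤ j, b m = b' m) :
    schemeCell g U b j = schemeCell g U b' j := by
  have hcyl : {c : ℕ → ℕ | ∀ m ≤ j, c m = (b m).unpair.1} =
      {c | ∀ m ≤ j, c m = (b' m).unpair.1} :=
    ext fun c => forall₂_congr fun m hm => by rw [h m hm]
  rw [schemeCell, schemeCell, h j le_rfl, hcyl]

theorem exists_forall_mem_schemeCell (hcover : ∀ j z, ∃ i, z ∈ U j i) (a : ℕ → ℕ) :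
    ∃ b, ∀ j, g a ∈ schemeCell g U b j := by
  choose i hi using fun j => hcover j (g a)
  refine ⟨fun j => Nat.pair (a j) (i j), fun j => ?_⟩
  have hne : (U j (i j) ∩ g '' {c | ∀ m ≤ j, c m = a m}).Nonempty :=
    ⟨g a, hi j, a, fun _ _ => rfl, rfl⟩
  simpa [schemeCell, hne] using hi j

theorem mem_range_of_forall_mem_schemeCell [MetricSpace Z] (hg : Continuous g) {ε : ℕ → ℝ}
    (hε : Tendsto ε atTop (𝓝 0)) (hmesh : ∀ j i, ∀ w ∈ U j i, ∀ w' ∈ U j i, dist w w' ≤ ε j)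
    {z : Z} {b : ℕ → ℕ} (hb : ∀ j, z ∈ schemeCell g U b j) : z ∈ range g := by
  let a : ℕ → ℕ := fun m => (b m).unpair.1
  have hclose : ∀ j, ∃ c : ℕ → ℕ, (∀ m ≤ j, c m = a m) ∧ dist (g c) z ≤ ε j := by
    intro j
    have hz := hb j
    unfold schemeCell at hz
    split_ifs at hz with hne
    · obtain ⟨_, hy, c, hc, rfl⟩ := hne
      exact ⟨c, hc, hmesh _ _ _ hy _ hz⟩
    · exact absurd hz (notMem_empty z)
  choose c hca hcz using hclose
  have hc : Tendsto c atTop (𝓝 a) := tendsto_pi_nhds.2 fun m =>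
    tendsto_const_nhds.congr' (eventually_atTop.2 ⟨m, fun j hj => (hca j m hj).symm⟩)
  have hgz : Tendsto (g ∘ c) atTop (𝓝 z) :=
    tendsto_iff_dist_tendsto_zero.2 (squeeze_zero (fun _ => dist_nonneg) hcz hε)
  exact ⟨a, tendsto_nhds_unique ((hg.tendsto a).comp hc) hgz⟩

end Cells

/-- There is a monotone analytic subset of `2^ω` which is `Σ¹₁`-complete: every analytic
subset of a zero-dimensional Polish space is reduced to it by a continuous function. -/
theorem exists_monotone_analytic_complete :
    ∃ A : Set CantorSpace, IsMonotoneSet A ∧ AnalyticSet A ∧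
      ∀ (Z : Type) (_ : TopologicalSpace Z) (_ : PolishSpace Z), ZeroDimensional Z →
        ∀ P : Set Z, AnalyticSet P →
          ∃ f : Z → CantorSpace, Continuous f ∧ P = f ⁻¹' A := by
  refine ⟨branchSet, isMonotoneSet_branchSet, analyticSet_branchSet, ?_⟩
  intro Z _ _ hZ P hP
  let := metrizableSpaceMetric Z
  rw [AnalyticSet] at hP
  rcases hP with rfl | ⟨g, hg, rfl⟩
  · exact ⟨fun _ _ => false, continuous_const, by ext; simp [branchSet]⟩
  choose U hU hcover hmesh using fun j : ℕ =>
    exists_clopen_cover_of_dist_le hZ (Nat.one_div_pos_of_nat (n := j))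
  obtain ⟨f, hf, hfiff⟩ := exists_continuous_reduction_to_branchSet (schemeCell g U)
    (isClopen_schemeCell hU) fun _ _ _ => schemeCell_congr
  refine ⟨f, hf, Set.ext fun z => ?_⟩
  rw [mem_preimage, hfiff]
  refine ⟨?_, fun ⟨b, hb⟩ => mem_range_of_forall_mem_schemeCell hg
    tendsto_one_div_add_atTop_nhds_zero_nat hmesh hb⟩
  rintro ⟨a, rfl⟩
  exact exists_forall_mem_schemeCell hcover a
end

section
/- There exists a subset A of the Cantor space 2^ω which is monotone and analytic but not Borel. -/
open MeasureTheory

/-!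
A point `y` of `2^ω` codes the closed subset of `X × ℕ^ℕ` left after removing the basic open sets
selected by `y`, and hence its projection to `X`; every analytic subset of a Polish space `X`
arises this way. Diagonalizing this universal analytic set for `X = 2^ω` gives an analytic set `B`
that is not Borel. The embedding `x ↦ (x 0, ¬x 0, x 1, ¬x 1, …)` has an antichain as range, so
the upward closure `A` of the image of `B` pulls back to `B`: `A` is monotone and analytic, and it
is not Borel since `B` is not.
-/

open Set TopologicalSpace

-- Instance search does not find this on its own.
instance : PolishSpace CantorSpace := {}

instance : OrderClosedTopology Bool := ⟨isClosed_discrete _⟩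

theorem isMonotoneSet_iff_isUpperSet {A : Set CantorSpace} :
    IsMonotoneSet A ↔ IsUpperSet A := by
  simp only [IsMonotoneSet, IsUpperSet, Pi.le_def, Bool.le_iff_imp]
  exact ⟨fun h x y hxy hx => h x y hx hxy, fun h x y hx hxy => h hxy hx⟩

section ClosedOfCode

variable {Y : Type*} [TopologicalSpace Y]

def closedOfCode (e : ℕ → Set Y) (y : CantorSpace) : Set Y :=
  (⋃ (n) (_ : y n = true), e n)ᶜ

theorem isClosed_setOf_mem_closedOfCode {e : ℕ → Set Y} (he : ∀ n, IsOpen (e n)) :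
    IsClosed {p : CantorSpace × Y | p.2 ∈ closedOfCode e p.1} := by
  have hcompl : {p : CantorSpace × Y | p.2 ∈ closedOfCode e p.1}ᶜ =
      ⋃ n, (fun p : CantorSpace × Y => p.1 n) ⁻¹' {true} ∩ Prod.snd ⁻¹' e n := by
    ext p
    simp [closedOfCode]
  rw [← isOpen_compl_iff, hcompl]
  exact isOpen_iUnion fun n =>
    ((isOpen_discrete _).preimage (by fun_prop)).inter ((he n).preimage continuous_snd)

theorem exists_closedOfCode_eq {e : ℕ → Set Y} (he : IsTopologicalBasis (range e))
    {F : Set Y} (hF : IsClosed F) : ∃ y, closedOfCode e y = F := by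
  classical
  refine ⟨fun n => decide (Disjoint (e n) F), ?_⟩
  rw [closedOfCode, compl_eq_comm, he.open_eq_sUnion' hF.isOpen_compl]
  ext q
  simp [subset_compl_iff_disjoint_right]

end ClosedOfCode

namespace MeasureTheory.AnalyticSet

variable {X : Type*} [TopologicalSpace X]

theorem exists_isClosed_image_fst_eq [T2Space X] {s : Set X} (hs : AnalyticSet s) :
    ∃ F : Set (X × (ℕ → ℕ)), IsClosed F ∧ Prod.fst '' F = s := by
  rw [AnalyticSet] at hs
  rcases hs with rfl | ⟨f, hf, rfl⟩
  · exact ⟨∅, isClosed_empty, image_empty _⟩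
  · refine ⟨{q | f q.2 = q.1}, isClosed_eq (hf.comp continuous_snd) continuous_fst, ?_⟩
    ext x
    simp [eq_comm]

theorem upperClosure [PolishSpace X] [Preorder X] [OrderClosedTopology X] {s : Set X}
    (hs : AnalyticSet s) : AnalyticSet (_root_.upperClosure s : Set X) := by
  obtain ⟨β, _, _, f, hf, rfl⟩ := analyticSet_iff_exists_polishSpace_range.1 hs
  have hgraph : (_root_.upperClosure (range f) : Set X) =
      Prod.snd '' {q : β × X | f q.1 ≤ q.2} := by
    ext a
    simp
  rw [hgraph]
  exact (isClosed_le (hf.comp continuous_fst) continuous_snd).analyticSet.image_of_continuous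
    continuous_snd

end MeasureTheory.AnalyticSet

theorem exists_universal_analyticSet (X : Type*) [TopologicalSpace X] [PolishSpace X] :
    ∃ U : Set (CantorSpace × X), AnalyticSet U ∧
      ∀ s : Set X, AnalyticSet s → ∃ y, Prod.mk y ⁻¹' U = s := by
  obtain ⟨e, he⟩ := exists_seq_basis (X × (ℕ → ℕ))
  let C := {p : CantorSpace × (X × (ℕ → ℕ)) | p.2 ∈ closedOfCode e p.1}
  have hC : IsClosed C := isClosed_setOf_mem_closedOfCode fun n => he.isOpen (mem_range_self n)
  refine ⟨(fun p => (p.1, p.2.1)) '' C, hC.analyticSet.image_of_continuous (by fun_prop),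
    fun s hs => ?_⟩
  obtain ⟨F, hF, rfl⟩ := hs.exists_isClosed_image_fst_eq
  obtain ⟨y, rfl⟩ := exists_closedOfCode_eq he hF
  refine ⟨y, ?_⟩
  ext x
  simp [C]

theorem exists_analyticSet_not_measurableSet :
    ∃ s : Set CantorSpace, AnalyticSet s ∧ ¬ MeasurableSet s := by
  obtain ⟨U, hU, huniv⟩ := exists_universal_analyticSet CantorSpace
  refine ⟨(fun x => (x, x)) ⁻¹' U, hU.preimage (by fun_prop), fun hmeas => ?_⟩
  obtain ⟨y, hy⟩ := huniv _ hmeas.compl.analyticSet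
  exact iff_not_self (Set.ext_iff.1 hy y)

theorem preimage_upperClosure_image {α β : Type*} [Preorder α] [Preorder β] {f : α → β}
    (hf : ∀ x y, f x ≤ f y → x = y) (s : Set α) : f ⁻¹' upperClosure (f '' s) = s := by
  ext x
  simp only [mem_preimage, SetLike.mem_coe, mem_upperClosure, mem_image, exists_exists_and_eq_and]
  exact ⟨fun ⟨y, hy, hyx⟩ => hf y x hyx ▸ hy, fun hx => ⟨x, hx, le_rfl⟩⟩

def interleaveCompl (x : CantorSpace) : CantorSpace := fun m => xor (x (m / 2)) (m % 2 == 1)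

@[simp]
theorem interleaveCompl_two_mul (x : CantorSpace) (n : ℕ) : interleaveCompl x (2 * n) = x n := by
  simp [interleaveCompl]

@[simp]
theorem interleaveCompl_two_mul_add_one (x : CantorSpace) (n : ℕ) :
    interleaveCompl x (2 * n + 1) = !x n := by
  simp [interleaveCompl, Nat.add_div_of_dvd_right]

theorem continuous_interleaveCompl : Continuous interleaveCompl := by
  unfold interleaveCompl
  fun_prop

theorem eq_of_interleaveCompl_le {x y : CantorSpace} (h : interleaveCompl x ≤ interleaveCompl y) :
    x = y :=
  funext fun n => le_antisymm (by simpa using h (2 * n))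
    (compl_le_compl_iff_le.1 (by simpa using h (2 * n + 1)))

/-- There is a monotone analytic subset of the Cantor space which is not Borel. -/
theorem exists_monotone_analytic_not_borel :
    ∃ A : Set CantorSpace, IsMonotoneSet A ∧ AnalyticSet A ∧ ¬ MeasurableSet A := by
  obtain ⟨B, hB, hB_not⟩ := exists_analyticSet_not_measurableSet
  refine ⟨upperClosure (interleaveCompl '' B), isMonotoneSet_iff_isUpperSet.2 (UpperSet.upper _),
    (hB.image_of_continuous continuous_interleaveCompl).upperClosure, fun hA => hB_not ?_⟩
  rw [← preimage_upperClosure_image (fun _ _ => eq_of_interleaveCompl_le) B]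
  exact hA.preimage continuous_interleaveCompl.measurable
end

section
/- Let N ≥ 1 and let A, B be disjoint analytic subsets of ℝ^N with A convex. Then there exists a convexly generated set C ⊆ ℝ^N with A ⊆ C and C ∩ B = ∅. -/
open MeasureTheory

/-- `A ⊆ ℝ^N` is *convexly generated* if it belongs to the least family of subsets of `ℝ^N`
which contains all compact convex sets and is closed under countable increasing unions
and countable intersections. -/
inductive ConvexlyGenerated (N : ℕ) : Set (Fin N → ℝ) → Prop
  | compactConvex (K : Set (Fin N → ℝ)) : IsCompact K → Convex ℝ K → ConvexlyGenerated N K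
  | iUnion (f : ℕ → Set (Fin N → ℝ)) : (∀ n, ConvexlyGenerated N (f n)) →
      (∀ n, f n ⊆ f (n + 1)) → ConvexlyGenerated N (⋃ n, f n)
  | iInter (f : ℕ → Set (Fin N → ℝ)) : (∀ n, ConvexlyGenerated N (f n)) →
      ConvexlyGenerated N (⋂ n, f n)


/-!
Lusin's separation argument in the Baire space, with compact boxes in place of cylinders.
Write `A = range f`, `B = range g` and `prefixIic γ n = {σ | ∀ i < n, σ i ≤ γ i}`.
Separability by a convexly generated set is preserved by countable unions on the right and by
increasing countable unions on the left, and `prefixIic γ n` is the increasing union over `m`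
of the boxes of level `n + 1` obtained by setting `γ n = m`. So if `A` and `B` were not
separable, one could pick branches `γ`, `τ` such that `f '' prefixIic γ n` and
`g '' prefixIic τ n` are inseparable for every `n`. But `Iic γ` is compact, so by
Carathéodory the convex hull `Z` of `f '' Iic γ` is compact; it lies in the convex set `A`,
hence is disjoint from the compact set `g '' Iic τ`. A small closed thickening of `Z` is compact
and convex, and by compactness of `Iic γ` and `Iic τ` it separates the images of the level-`n`
boxes for large `n`.
-/

open Set Metric Module PiNat Function

section Caratheodory

theorem exists_fin_finrank_succ_of_mem_convexHull {𝕜 E : Type*} [Field 𝕜] [LinearOrder 𝕜]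
    [IsStrictOrderedRing 𝕜] [AddCommGroup E] [Module 𝕜 E] [FiniteDimensional 𝕜 E]
    {s : Set E} {x : E} (hx : x ∈ convexHull 𝕜 s) :
    ∃ w ∈ stdSimplex 𝕜 (Fin (finrank 𝕜 E + 1)), ∃ v : Fin (finrank 𝕜 E + 1) → E,
      (∀ j, v j ∈ s) ∧ ∑ j, w j • v j = x := by
  obtain ⟨ι, _, z, w, hzs, hz, hw₀, hw₁, rfl⟩ := eq_pos_convex_span_of_mem_convexHull hx
  have hcard : Fintype.card ι ≤ Fintype.card (Fin (finrank 𝕜 E + 1)) := by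
    simpa using hz.card_le_finrank_succ.trans
      (Nat.add_le_add_right (Submodule.finrank_le _) 1)
  obtain ⟨e⟩ := Embedding.nonempty_of_card_le hcard
  obtain ⟨i₀⟩ : Nonempty ι := by
    by_contra! h
    simp at hw₁
  -- pad the Carathéodory combination with zero weights on the points outside the range of `e`
  have hext : ∀ j ∉ range e, extend e w 0 j = 0 := fun j hj => extend_apply' _ _ _ hj
  refine ⟨extend e w 0, ⟨fun j => ?_, ?_⟩, extend e z fun _ => z i₀, fun j => ?_, ?_⟩
  · by_cases hj : j ∈ range e
    · obtain ⟨i, rfl⟩ := hj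
      rw [e.injective.extend_apply]
      exact (hw₀ i).le
    · rw [hext j hj]
  · rw [← hw₁]
    exact (Fintype.sum_of_injective e e.injective _ _ hext fun i => by
      rw [e.injective.extend_apply]).symm
  · by_cases hj : j ∈ range e
    · obtain ⟨i, rfl⟩ := hj
      rw [e.injective.extend_apply]
      exact hzs ⟨i, rfl⟩
    · rw [extend_apply' _ _ _ hj]
      exact hzs ⟨i₀, rfl⟩
  · exact (Fintype.sum_of_injective e e.injective _ _ (fun j hj => by rw [hext j hj, zero_smul])
      fun i => by rw [e.injective.extend_apply, e.injective.extend_apply]).symm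

theorem IsCompact.convexHull {E : Type*} [AddCommGroup E] [Module ℝ E] [TopologicalSpace E]
    [IsTopologicalAddGroup E] [ContinuousSMul ℝ E] [FiniteDimensional ℝ E] {s : Set E}
    (hs : IsCompact s) : IsCompact (_root_.convexHull ℝ s) := by
  set n := finrank ℝ E + 1
  have hhull : _root_.convexHull ℝ s =
      (fun p : (Fin n → ℝ) × (Fin n → E) => ∑ j, p.1 j • p.2 j) ''
        (stdSimplex ℝ (Fin n) ×ˢ univ.pi fun _ => s) := by
    refine Subset.antisymm (fun x hx => ?_) ?_
    · obtain ⟨w, hw, v, hv, rfl⟩ := exists_fin_finrank_succ_of_mem_convexHull hx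
      exact ⟨(w, v), ⟨hw, fun j _ => hv j⟩, rfl⟩
    · rintro _ ⟨⟨w, v⟩, ⟨hw, hv⟩, rfl⟩
      exact (convex_convexHull ℝ s).sum_mem (fun j _ => hw.1 j) hw.2
        fun j _ => subset_convexHull ℝ s (hv j (mem_univ j))
  rw [hhull]
  exact ((isCompact_stdSimplex ℝ _).prod (isCompact_univ_pi fun _ => hs)).image (by fun_prop)

end Caratheodory

section BaireSpace

theorem isCompact_Iic {α : Type*} [Preorder α] [OrderBot α] [TopologicalSpace α]
    [CompactIccSpace α] (a : α) : IsCompact (Iic a) :=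
  Icc_bot (a := a) ▸ isCompact_Icc

theorem exists_forall_of_exists_mem_cylinder {β : Type*} {P : ℕ → (ℕ → β) → Prop}
    (x₀ : ℕ → β) (h₀ : P 0 x₀)
    (hstep : ∀ n x, P n x → ∃ y ∈ cylinder x n, P (n + 1) y)
    (hP : ∀ n x y, y ∈ cylinder x n → P n x → P n y) :
    ∃ x, ∀ n, P n x := by
  choose! next hnext hPnext using hstep
  let s : ℕ → ℕ → β := fun n => Nat.rec x₀ next n
  have hs : ∀ n, P n (s n) := fun n => Nat.rec h₀ (fun n ih => hPnext n (s n) ih) n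
  have hlim : ∀ n, (fun i => s (i + 1) i) ∈ cylinder (s n) n := by
    intro n
    induction n with
    | zero => exact fun i hi => absurd hi (Nat.not_lt_zero i)
    | succ n ih =>
      intro i hi
      rcases Nat.lt_succ_iff_lt_or_eq.1 hi with hi | rfl
      · exact (ih i hi).trans (hnext n (s n) (hs n) i hi).symm
      · rfl
  exact ⟨_, fun n => hP n _ _ (hlim n) (hs n)⟩

def prefixIic (γ : ℕ → ℕ) (n : ℕ) : Set (ℕ → ℕ) := {σ | ∀ i < n, σ i ≤ γ i}

theorem prefixIic_zero (γ : ℕ → ℕ) : prefixIic γ 0 = univ :=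
  eq_univ_of_forall fun _ i hi => absurd hi (Nat.not_lt_zero i)

theorem prefixIic_congr {γ γ' : ℕ → ℕ} {n : ℕ} (h : γ' ∈ cylinder γ n) :
    prefixIic γ' n = prefixIic γ n := by
  ext σ
  exact forall₂_congr fun i hi => by rw [h i hi]

theorem prefixIic_anti (γ : ℕ → ℕ) : Antitone (prefixIic γ) :=
  fun _ _ hmn _ hσ i hi => hσ i (hi.trans_le hmn)

theorem monotone_prefixIic_update (γ : ℕ → ℕ) (n : ℕ) :
    Monotone fun m => prefixIic (update γ n m) (n + 1) := by
  intro m m' hm σ hσ i hi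
  rcases eq_or_ne i n with rfl | hin
  · simpa using (show σ i ≤ m by simpa using hσ i hi).trans hm
  · simpa [hin] using hσ i hi

theorem iUnion_prefixIic_update (γ : ℕ → ℕ) (n : ℕ) :
    ⋃ m, prefixIic (update γ n m) (n + 1) = prefixIic γ n := by
  refine Subset.antisymm (iUnion_subset fun m σ hσ i hi => ?_) fun σ hσ => ?_
  · simpa [hi.ne] using hσ i (hi.trans n.lt_succ_self)
  · refine mem_iUnion.2 ⟨σ n, fun i hi => ?_⟩
    rcases Nat.lt_succ_iff_lt_or_eq.1 hi with hi | rfl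
    · simpa [hi.ne] using hσ i hi
    · simp

theorem exists_prefixIic_subset {U : Set (ℕ → ℕ)} (hU : IsOpen U) {γ : ℕ → ℕ}
    (hγ : Iic γ ⊆ U) : ∃ n, prefixIic γ n ⊆ U := by
  let W : ℕ → Set (ℕ → ℕ) := fun n => {σ | cylinder σ n ⊆ U}
  have hWopen : ∀ n, IsOpen (W n) := fun n => isOpen_iff_mem_nhds.2 fun σ hσ =>
    Filter.mem_of_superset ((isOpen_cylinder (fun _ => ℕ) σ n).mem_nhds (self_mem_cylinder σ n))
      fun ρ hρ => by rwa [mem_ofPred_eq, mem_cylinder_iff_eq.1 hρ]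
  have hUW : U ⊆ ⋃ n, W n := by
    intro σ hσ
    obtain ⟨_, ⟨x, n, rfl⟩, hσx, hxU⟩ :=
      (isTopologicalBasis_cylinders fun _ => ℕ).exists_subset_of_mem_open hσ hU
    exact mem_iUnion.2 ⟨n, by rwa [mem_ofPred_eq, mem_cylinder_iff_eq.1 hσx]⟩
  have hWmono : Monotone W := fun _ _ hmn σ hσ => (cylinder_anti σ hmn).trans hσ
  obtain ⟨n, hn⟩ := (isCompact_Iic γ).elim_directed_cover W hWopen
    (hγ.trans hUW) hWmono.directed_le
  -- clamping `σ` below `γ` does not change its first `n` coordinates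
  refine ⟨n, fun σ hσ => hn (inf_le_right : σ ⊓ γ ≤ γ) fun i hi => ?_⟩
  exact (min_eq_left (hσ i hi)).symm

end BaireSpace

section Separation

theorem ConvexlyGenerated.univ (N : ℕ) : ConvexlyGenerated N univ := by
  rw [← iUnion_closedBall_nat 0]
  exact .iUnion _ (fun n => .compactConvex _ (isCompact_closedBall _ _) (convex_closedBall _ _))
    fun n => closedBall_subset_closedBall (by simp)

variable {N : ℕ}

def ConvexlySeparable (N : ℕ) (X Y : Set (Fin N → ℝ)) : Prop :=
  ∃ C, ConvexlyGenerated N C ∧ X ⊆ C ∧ Disjoint C Y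

theorem convexlySeparable_empty_left (Y : Set (Fin N → ℝ)) : ConvexlySeparable N ∅ Y :=
  ⟨∅, .compactConvex _ isCompact_empty convex_empty, empty_subset _, empty_disjoint _⟩

theorem convexlySeparable_empty_right (X : Set (Fin N → ℝ)) : ConvexlySeparable N X ∅ :=
  ⟨univ, .univ N, subset_univ _, disjoint_empty _⟩

theorem ConvexlySeparable.iUnion_right {X : Set (Fin N → ℝ)} {Y : ℕ → Set (Fin N → ℝ)}
    (h : ∀ k, ConvexlySeparable N X (Y k)) : ConvexlySeparable N X (⋃ k, Y k) := by
  choose C hC hXC hCY using h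
  exact ⟨⋂ k, C k, .iInter _ hC, subset_iInter hXC,
    disjoint_iUnion_right.2 fun k => (hCY k).mono_left (iInter_subset _ k)⟩

theorem ConvexlySeparable.iUnion_left {X : ℕ → Set (Fin N → ℝ)} {Y : Set (Fin N → ℝ)}
    (hX : Monotone X) (h : ∀ m, ConvexlySeparable N (X m) Y) :
    ConvexlySeparable N (⋃ m, X m) Y := by
  choose C hC hXC hCY using h
  -- `⋂ j, C (p + j)` contains every `X m` with `m ≤ p`, and increases with `p`
  refine ⟨⋃ p, ⋂ j, C (p + j), .iUnion _ (fun p => .iInter _ fun j => hC _) fun p => ?_,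
    iUnion_mono fun m => subset_iInter fun j => (hX (m.le_add_right j)).trans (hXC _),
    disjoint_iUnion_left.2 fun p => (hCY p).mono_left (iInter_subset _ 0)⟩
  exact subset_iInter fun j =>
    (iInter_subset _ (j + 1)).trans_eq (by rw [Nat.add_right_comm, Nat.add_assoc])

theorem ConvexlySeparable.image_prefixIic_of_update {f g : (ℕ → ℕ) → (Fin N → ℝ)}
    {γ τ : ℕ → ℕ} {n : ℕ}
    (h : ∀ m k, ConvexlySeparable N (f '' prefixIic (update γ n m) (n + 1))
      (g '' prefixIic (update τ n k) (n + 1))) :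
    ConvexlySeparable N (f '' prefixIic γ n) (g '' prefixIic τ n) := by
  rw [← iUnion_prefixIic_update γ n, ← iUnion_prefixIic_update τ n, image_iUnion,
    image_iUnion]
  exact .iUnion_left (fun _ _ hm => image_mono (monotone_prefixIic_update γ n hm))
    fun m => .iUnion_right (h m)

theorem exists_convexlySeparable_image_prefixIic {f g : (ℕ → ℕ) → (Fin N → ℝ)}
    (hf : Continuous f) (hg : Continuous g) (hconv : Convex ℝ (range f))
    (hdisj : Disjoint (range f) (range g)) (γ τ : ℕ → ℕ) :
    ∃ n, ConvexlySeparable N (f '' prefixIic γ n) (g '' prefixIic τ n) := by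
  set Z := convexHull ℝ (f '' Iic γ)
  have hZ : IsCompact Z := ((isCompact_Iic γ).image hf).convexHull
  have hZL : Disjoint Z (g '' Iic τ) :=
    hdisj.mono (convexHull_min (image_subset_range _ _) hconv) (image_subset_range _ _)
  obtain ⟨δ, hδ, hsep⟩ := hZL.exists_cthickenings hZ ((isCompact_Iic τ).image hg).isClosed
  obtain ⟨n₁, hn₁⟩ := exists_prefixIic_subset (isOpen_thickening.preimage hf)
    fun σ hσ => self_subset_thickening hδ _ (subset_convexHull ℝ _ (mem_image_of_mem f hσ))
  obtain ⟨n₂, hn₂⟩ := exists_prefixIic_subset (isOpen_thickening.preimage hg)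
    fun σ hσ => self_subset_thickening hδ _ (mem_image_of_mem g hσ)
  refine ⟨max n₁ n₂, cthickening δ Z,
    .compactConvex _ hZ.cthickening ((convex_convexHull ℝ _).cthickening δ), ?_,
    hsep.mono_right ?_⟩
  · exact (image_subset_iff.2 ((prefixIic_anti γ (le_max_left _ _)).trans hn₁)).trans
      (thickening_subset_cthickening _ _)
  · exact (image_subset_iff.2 ((prefixIic_anti τ (le_max_right _ _)).trans hn₂)).trans
      (thickening_subset_cthickening _ _)

theorem convexlySeparable_range {f g : (ℕ → ℕ) → (Fin N → ℝ)} (hf : Continuous f)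
    (hg : Continuous g) (hconv : Convex ℝ (range f)) (hdisj : Disjoint (range f) (range g)) :
    ConvexlySeparable N (range f) (range g) := by
  by_contra hsep
  let P : ℕ → (ℕ → ℕ × ℕ) → Prop := fun n x =>
    ¬ ConvexlySeparable N (f '' prefixIic (Prod.fst ∘ x) n) (g '' prefixIic (Prod.snd ∘ x) n)
  have h₀ : P 0 0 := by simpa [P, prefixIic_zero] using hsep
  have hstep : ∀ n x, P n x → ∃ y ∈ cylinder x n, P (n + 1) y := by
    intro n x hx
    by_contra! hy
    refine hx (.image_prefixIic_of_update fun m k => ?_)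
    simpa [P, comp_update] using hy _ (update_mem_cylinder x n (m, k))
  have hP : ∀ n x y, y ∈ cylinder x n → P n x → P n y := by
    intro n x y hxy
    have h₁ : Prod.fst ∘ y ∈ cylinder (Prod.fst ∘ x) n := fun i hi =>
      congrArg Prod.fst (hxy i hi)
    have h₂ : Prod.snd ∘ y ∈ cylinder (Prod.snd ∘ x) n := fun i hi =>
      congrArg Prod.snd (hxy i hi)
    simp only [P, prefixIic_congr h₁, prefixIic_congr h₂, imp_self]
  obtain ⟨x, hx⟩ := exists_forall_of_exists_mem_cylinder 0 h₀ hstep hP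
  obtain ⟨n, hn⟩ := exists_convexlySeparable_image_prefixIic hf hg hconv hdisj
    (Prod.fst ∘ x) (Prod.snd ∘ x)
  exact hx n hn

end Separation

theorem preiss_separation_general (N : ℕ) (A B : Set (Fin N → ℝ))
    (hA : AnalyticSet A) (hB : AnalyticSet B) (hdisj : Disjoint A B)
    (hconv : Convex ℝ A) :
    ∃ C : Set (Fin N → ℝ), ConvexlyGenerated N C ∧ A ⊆ C ∧ C ∩ B = ∅ := by
  suffices hsep : ConvexlySeparable N A B by
    obtain ⟨C, hC, hAC, hCB⟩ := hsep
    exact ⟨C, hC, hAC, disjoint_iff_inter_eq_empty.1 hCB⟩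
  rw [AnalyticSet] at hA hB
  rcases hA with rfl | ⟨f, hf, rfl⟩
  · exact convexlySeparable_empty_left B
  rcases hB with rfl | ⟨g, hg, rfl⟩
  · exact convexlySeparable_empty_right _
  exact convexlySeparable_range hf hg hconv hdisj

/-- **Preiss separation**: disjoint analytic subsets `A, B` of `ℝ^N` with `A` convex can be
separated by a convexly generated set. -/
theorem preiss_separation (N : ℕ) (hN : 1 ≤ N) (A B : Set (Fin N → ℝ))
    (hA : AnalyticSet A) (hB : AnalyticSet B) (hdisj : Disjoint A B)
    (hconv : Convex ℝ A) :
    ∃ C : Set (Fin N → ℝ), ConvexlyGenerated N C ∧ A ⊆ C ∧ C ∩ B = ∅ :=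
  preiss_separation_general N A B hA hB hdisj hconv
end

section
/- For N ≥ 1, a subset of ℝ^N is convexly generated if and only if it belongs to the least family of subsets of ℝ^N which contains all open convex sets and is closed under countable increasing unions and countable intersections. -/
/-- The least family of subsets of `ℝ^N` containing all open convex sets and closed under
countable increasing unions and countable intersections. -/
inductive ConvexlyGeneratedFromOpen (N : ℕ) : Set (Fin N → ℝ) → Prop
  | openConvex (U : Set (Fin N → ℝ)) : IsOpen U → Convex ℝ U → ConvexlyGeneratedFromOpen N U
  | iUnion (f : ℕ → Set (Fin N → ℝ)) : (∀ n, ConvexlyGeneratedFromOpen N (f n)) →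
      (∀ n, f n ⊆ f (n + 1)) → ConvexlyGeneratedFromOpen N (⋃ n, f n)
  | iInter (f : ℕ → Set (Fin N → ℝ)) : (∀ n, ConvexlyGeneratedFromOpen N (f n)) →
      ConvexlyGeneratedFromOpen N (⋂ n, f n)

open Metric Set

lemma mem_compl_thickening_compl_iff {α : Type*} [PseudoMetricSpace α] {δ : ℝ} {s : Set α}
    {x : α} : x ∈ (thickening δ sᶜ)ᶜ ↔ ball x δ ⊆ s := by
  simp only [mem_compl_iff, mem_thickening_iff, not_exists, not_and, not_lt]
  exact forall_congr' fun z => by rw [mem_ball', not_imp_comm, not_le]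

lemma closure_eq_iInter_thickening_one_div {α : Type*} [PseudoMetricSpace α] (s : Set α) :
    closure s = ⋂ n : ℕ, thickening (1 / (n + 1 : ℝ)) s := by
  rw [closure_eq_iInter_thickening' s (range fun n : ℕ => 1 / (n + 1 : ℝ)), biInter_range]
  · rintro _ ⟨n, rfl⟩
    exact mem_Ioi.mpr Nat.one_div_pos_of_nat
  · intro ε hε
    obtain ⟨n, hn⟩ := exists_nat_one_div_lt hε
    exact ⟨_, mem_range_self n, Nat.one_div_pos_of_nat, hn.le⟩

lemma IsOpen.iUnion_compl_thickening_compl {α : Type*} [PseudoMetricSpace α] {s : Set α}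
    (hs : IsOpen s) : ⋃ n : ℕ, (thickening (1 / (n + 1 : ℝ)) sᶜ)ᶜ = s := by
  refine subset_antisymm (iUnion_subset fun n x hx => ?_) fun x hx => ?_
  · exact mem_compl_thickening_compl_iff.mp hx (mem_ball_self Nat.one_div_pos_of_nat)
  · obtain ⟨ε, hε, hball⟩ := Metric.isOpen_iff.mp hs x hx
    obtain ⟨n, hn⟩ := exists_nat_one_div_lt hε
    exact mem_iUnion_of_mem n <|
      mem_compl_thickening_compl_iff.mpr ((ball_subset_ball hn.le).trans hball)

lemma monotone_compl_thickening_one_div_compl {α : Type*} [PseudoMetricSpace α] (s : Set α) :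
    Monotone fun n : ℕ => (thickening (1 / (n + 1 : ℝ)) sᶜ)ᶜ := fun _ _ hmn =>
  compl_subset_compl.mpr <| thickening_mono (Nat.one_div_le_one_div hmn) _

lemma Convex.compl_thickening_compl {E : Type*} [SeminormedAddCommGroup E] [NormedSpace ℝ E]
    {s : Set E} (hs : Convex ℝ s) (δ : ℝ) : Convex ℝ (Metric.thickening δ sᶜ)ᶜ := by
  have : (Metric.thickening δ sᶜ)ᶜ = ⋂ v ∈ ball (0 : E) δ, (fun x => v + x) ⁻¹' s := by
    ext x
    simp only [mem_compl_thickening_compl_iff, mem_iInter, mem_preimage, mem_ball_zero_iff]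
    refine ⟨fun h v hv => h ?_, fun h y hy => ?_⟩
    · rwa [mem_ball, dist_eq_norm, add_sub_cancel_right]
    · simpa using h (y - x) (by rwa [← dist_eq_norm])
  rw [this]
  exact convex_iInter₂ fun v _ => hs.translate_preimage_right v

lemma ConvexlyGeneratedFromOpen.of_isClosed_of_convex {N : ℕ} {K : Set (Fin N → ℝ)}
    (hK : IsClosed K) (hc : Convex ℝ K) : ConvexlyGeneratedFromOpen N K := by
  rw [← hK.closure_eq, closure_eq_iInter_thickening_one_div]
  exact .iInter _ fun _ => .openConvex _ isOpen_thickening (hc.thickening _)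

lemma ConvexlyGenerated.of_isOpen_of_convex {N : ℕ} {U : Set (Fin N → ℝ)}
    (hU : IsOpen U) (hc : Convex ℝ U) : ConvexlyGenerated N U := by
  set K : ℕ → Set (Fin N → ℝ) := fun n =>
    closedBall 0 n ∩ (thickening (1 / (n + 1 : ℝ)) Uᶜ)ᶜ with hK
  have hmono : Monotone K := fun _ _ hmn =>
    inter_subset_inter (closedBall_subset_closedBall (Nat.cast_le.mpr hmn))
      (monotone_compl_thickening_one_div_compl U hmn)
  have hUnion : ⋃ n, K n = U := by
    rw [hK, iUnion_inter_of_monotone (fun _ _ hmn => closedBall_subset_closedBall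
      (Nat.cast_le.mpr hmn)) (monotone_compl_thickening_one_div_compl U),
      iUnion_closedBall_nat, univ_inter, hU.iUnion_compl_thickening_compl]
  rw [← hUnion]
  refine .iUnion K (fun n => .compactConvex _ ?_ ?_) fun n => hmono n.le_succ
  · exact (isCompact_closedBall _ _).inter_right isOpen_thickening.isClosed_compl
  · exact (convex_closedBall _ _).inter (hc.compl_thickening_compl _)

lemma ConvexlyGenerated.fromOpen {N : ℕ} {A : Set (Fin N → ℝ)} (h : ConvexlyGenerated N A) :
    ConvexlyGeneratedFromOpen N A := by
  induction h with
  | compactConvex K hK hc => exact .of_isClosed_of_convex hK.isClosed hc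
  | iUnion f _ hmono ih => exact .iUnion f ih hmono
  | iInter f _ ih => exact .iInter f ih

lemma ConvexlyGeneratedFromOpen.convexlyGenerated {N : ℕ} {A : Set (Fin N → ℝ)}
    (h : ConvexlyGeneratedFromOpen N A) : ConvexlyGenerated N A := by
  induction h with
  | openConvex U hU hc => exact .of_isOpen_of_convex hU hc
  | iUnion f _ hmono ih => exact .iUnion f ih hmono
  | iInter f _ ih => exact .iInter f ih

theorem convexlyGenerated_iff_fromOpen_general (N : ℕ) (A : Set (Fin N → ℝ)) :
    ConvexlyGenerated N A ↔ ConvexlyGeneratedFromOpen N A :=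
  ⟨ConvexlyGenerated.fromOpen, ConvexlyGeneratedFromOpen.convexlyGenerated⟩

/-- A subset of `ℝ^N` is convexly generated iff it belongs to the least family containing
all open convex sets and closed under countable increasing unions and countable
intersections. -/
theorem convexlyGenerated_iff_fromOpen (N : ℕ) (hN : 1 ≤ N) (A : Set (Fin N → ℝ)) :
    ConvexlyGenerated N A ↔ ConvexlyGeneratedFromOpen N A :=
  convexlyGenerated_iff_fromOpen_general N A
end

section
/- For every N ≥ 1 there is a continuous bijection π : ℕ^ℕ → ℝ^N such that for every nonempty finite sequence u ∈ ℕ^{<ℕ}, the image π[N_u] of the cylinder N_u is a product of N half-open intervals [p_1, q_1) × ⋯ × [p_N, q_N) with rational endpoints p_i, q_i. -/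
/-!
Split `[a, b)` of length `L` into the half-open pieces `[b - L / 2 ^ k, b - L / 2 ^ (k + 1))`,
`k ∈ ℕ`, and `ℝ` into the unit intervals `[z, z + 1)`, `z ∈ ℤ` (indexed by `ℕ`). Reading
`α ∈ ℕ^ℕ` as an address (first a unit interval, then successive pieces) gives nested rational
intervals whose lengths at least halve at each step, so they shrink to a point `limit α`. The map
`limit` is continuous, and since these are partitions, every real number has exactly one address
(`digits`), so `limit` is bijective and sends each cylinder onto the interval it addresses.
For `ℝ^N`, a bijection `ℕ ≃ ℕ^N` transposes `ℕ^ℕ` homeomorphically onto `(ℕ^ℕ)^N`, carrying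
cylinders to products of cylinders; then apply `limit` in each coordinate.
-/

open Set PiNat Function

namespace BaireReal

def ico (I : ℚ × ℚ) : Set ℝ := Ico (I.1 : ℝ) I.2

def piece (I : ℚ × ℚ) (k : ℕ) : ℚ × ℚ :=
  (I.2 - (I.2 - I.1) / 2 ^ k, I.2 - (I.2 - I.1) / 2 ^ (k + 1))

/-- The index of the piece of `ico I` containing `x`: it is the `k`-th one iff
`2 ^ k ≤ L / (I.2 - x) < 2 ^ (k + 1)`, where `L` is the length of `I`. -/
noncomputable def digit (I : ℚ × ℚ) (x : ℝ) : ℕ := Nat.log 2 ⌊((I.2 - I.1 : ℚ) : ℝ) / (I.2 - x)⌋₊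

def root (k : ℕ) : ℚ × ℚ := (Equiv.intEquivNat.symm k, Equiv.intEquivNat.symm k + 1)

section piece

variable {I : ℚ × ℚ}

lemma piece_length (I : ℚ × ℚ) (k : ℕ) :
    (piece I k).2 - (piece I k).1 = (I.2 - I.1) / 2 ^ (k + 1) := by
  simp only [piece]; field_simp; ring

lemma piece_fst_lt_snd (h : I.1 < I.2) (k : ℕ) : (piece I k).1 < (piece I k).2 := by
  have := piece_length I k
  have : 0 < (I.2 - I.1) / 2 ^ (k + 1) := div_pos (sub_pos.2 h) (by positivity)
  linarith

lemma fst_le_piece_fst (h : I.1 < I.2) (k : ℕ) : I.1 ≤ (piece I k).1 := by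
  have : (I.2 - I.1) / 2 ^ k ≤ I.2 - I.1 :=
    div_le_self (sub_pos.2 h).le (one_le_pow₀ one_le_two)
  simp only [piece]; linarith

lemma piece_snd_lt_snd (h : I.1 < I.2) (k : ℕ) : (piece I k).2 < I.2 := by
  have : 0 < (I.2 - I.1) / 2 ^ (k + 1) := div_pos (sub_pos.2 h) (by positivity)
  simp only [piece]; linarith

lemma mem_ico_piece_iff {x : ℝ} (hx : x ∈ ico I) (k : ℕ) :
    x ∈ ico (piece I k) ↔ digit I x = k := by
  obtain ⟨hax, hxb⟩ := hx
  set L : ℝ := ((I.2 - I.1 : ℚ) : ℝ)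
  have hd : 0 < (I.2 : ℝ) - x := sub_pos.2 hxb
  have hL : 1 ≤ L / (I.2 - x) := by
    rw [le_div_iff₀ hd]; push_cast [L]; linarith
  calc x ∈ ico (piece I k)
      ↔ (I.2 - x) * 2 ^ k ≤ L ∧ L < (I.2 - x) * 2 ^ (k + 1) := by
        rw [← le_div_iff₀ (by positivity), ← div_lt_iff₀ (by positivity)]
        simp only [ico, piece, mem_Ico, L]
        push_cast
        constructor <;> rintro ⟨h1, h2⟩ <;> constructor <;> linarith
    _ ↔ (2 : ℝ) ^ k ≤ L / (I.2 - x) ∧ L / (I.2 - x) < 2 ^ (k + 1) := by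
        rw [le_div_iff₀ hd, div_lt_iff₀ hd, mul_comm, mul_comm (2 ^ (k + 1) : ℝ)]
    _ ↔ 2 ^ k ≤ ⌊L / (I.2 - x)⌋₊ ∧ ⌊L / (I.2 - x)⌋₊ < 2 ^ (k + 1) := by
        rw [Nat.le_floor_iff (by linarith), Nat.floor_lt (by linarith)]; push_cast; rfl
    _ ↔ digit I x = k :=
        (Nat.log_eq_iff (Or.inr ⟨one_lt_two, (Nat.floor_pos.2 hL).ne'⟩)).symm

lemma mem_ico_root_iff {x : ℝ} {k : ℕ} : x ∈ ico (root k) ↔ Equiv.intEquivNat ⌊x⌋ = k := by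
  rw [← Equiv.eq_symm_apply, Int.floor_eq_iff]
  simp [ico, root]

end piece

def box (α : ℕ → ℕ) : ℕ → ℚ × ℚ
  | 0 => root (α 0)
  | n + 1 => piece (box α n) (α (n + 1))

section box

variable (α : ℕ → ℕ)

lemma box_fst_lt_snd : ∀ n, (box α n).1 < (box α n).2
  | 0 => by simp [box, root]
  | n + 1 => piece_fst_lt_snd (box_fst_lt_snd n) _

lemma box_fst_mono : Monotone fun n => (box α n).1 :=
  monotone_nat_of_le_succ fun n => fst_le_piece_fst (box_fst_lt_snd α n) _

lemma box_snd_strictAnti : StrictAnti fun n => (box α n).2 :=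
  strictAnti_nat_of_succ_lt fun n => piece_snd_lt_snd (box_fst_lt_snd α n) _

lemma ico_box_succ_subset (n : ℕ) : ico (box α (n + 1)) ⊆ ico (box α n) :=
  Ico_subset_Ico (mod_cast box_fst_mono α n.le_succ)
    (mod_cast (box_snd_strictAnti α n.lt_succ_self).le)

lemma box_length_le : ∀ n, (box α n).2 - (box α n).1 ≤ (1 / 2) ^ n
  | 0 => by simp [box, root]
  | n + 1 => by
    have hlen : 0 ≤ (box α n).2 - (box α n).1 := (sub_pos.2 (box_fst_lt_snd α n)).le
    calc (box α (n + 1)).2 - (box α (n + 1)).1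
        = ((box α n).2 - (box α n).1) / 2 ^ (α (n + 1) + 1) := piece_length _ _
      _ ≤ ((box α n).2 - (box α n).1) / 2 :=
        div_le_div_of_nonneg_left hlen two_pos (le_self_pow₀ one_le_two (by omega))
      _ ≤ (1 / 2) ^ (n + 1) := by rw [pow_succ]; linarith [box_length_le n]

lemma dist_lt_of_mem_ico_box {n : ℕ} {x y : ℝ} (hx : x ∈ ico (box α n))
    (hy : y ∈ ico (box α n)) : dist x y < (1 / 2) ^ n := by
  have : (((box α n).2 - (box α n).1 : ℚ) : ℝ) ≤ (((1 / 2) ^ n : ℚ) : ℝ) :=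
    mod_cast box_length_le α n
  push_cast at this
  rw [Real.dist_eq, abs_sub_lt_iff]
  obtain ⟨hx1, hx2⟩ := hx
  obtain ⟨hy1, hy2⟩ := hy
  constructor <;> linarith

variable {α}

lemma box_eq_of_mem_cylinder {β : ℕ → ℕ} {n : ℕ} (h : β ∈ cylinder α (n + 1)) :
    box β n = box α n := by
  induction n with
  | zero => simp [box, h 0 Nat.zero_lt_one]
  | succ n ih =>
    rw [box, box, ih (cylinder_anti α (n + 1).le_succ h), h (n + 1) (Nat.lt_succ_self _)]

end box

noncomputable def limit (α : ℕ → ℕ) : ℝ := ⨆ n, ((box α n).1 : ℝ)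

lemma limit_mem_ico_box (α : ℕ → ℕ) (n : ℕ) : limit α ∈ ico (box α n) := by
  have le_snd : ∀ m k, ((box α m).1 : ℝ) ≤ (box α k).2 := fun m k => by
    exact_mod_cast (box_fst_mono α (le_max_left m k)).trans <|
      (box_fst_lt_snd α _).le.trans ((box_snd_strictAnti α).antitone (le_max_right m k))
  refine ⟨le_ciSup ⟨_, forall_mem_range.2 (le_snd · 0)⟩ n, ?_⟩
  exact (ciSup_le (le_snd · (n + 1))).trans_lt (mod_cast box_snd_strictAnti α n.lt_succ_self)

lemma limit_eq_of_forall_mem {α : ℕ → ℕ} {x : ℝ} (hx : ∀ n, x ∈ ico (box α n)) :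
    limit α = x := by
  refine eq_of_forall_dist_le fun ε hε => ?_
  obtain ⟨n, hn⟩ := exists_pow_lt_of_lt_one hε (by norm_num : (1 / 2 : ℝ) < 1)
  exact (dist_lt_of_mem_ico_box α (limit_mem_ico_box α n) (hx n)).le.trans hn.le

lemma continuous_limit : Continuous limit := by
  refine continuous_iff_continuousAt.2 fun α => Metric.tendsto_nhds.2 fun ε hε => ?_
  obtain ⟨n, hn⟩ := exists_pow_lt_of_lt_one hε (by norm_num : (1 / 2 : ℝ) < 1)
  filter_upwards [(isOpen_cylinder _ α (n + 1)).mem_nhds (self_mem_cylinder α _)] with β hβ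
  have hβα := limit_mem_ico_box β n
  rw [box_eq_of_mem_cylinder hβ] at hβα
  exact (dist_lt_of_mem_ico_box α hβα (limit_mem_ico_box α n)).trans hn

noncomputable def boxOf (x : ℝ) : ℕ → ℚ × ℚ
  | 0 => root (Equiv.intEquivNat ⌊x⌋)
  | n + 1 => piece (boxOf x n) (digit (boxOf x n) x)

noncomputable def digits (x : ℝ) : ℕ → ℕ
  | 0 => Equiv.intEquivNat ⌊x⌋
  | n + 1 => digit (boxOf x n) x

lemma box_digits (x : ℝ) : ∀ n, box (digits x) n = boxOf x n
  | 0 => rfl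
  | n + 1 => by rw [box, box_digits x n]; rfl

lemma mem_ico_boxOf (x : ℝ) : ∀ n, x ∈ ico (boxOf x n)
  | 0 => mem_ico_root_iff.2 rfl
  | n + 1 => (mem_ico_piece_iff (mem_ico_boxOf x n) _).2 rfl

lemma limit_digits (x : ℝ) : limit (digits x) = x :=
  limit_eq_of_forall_mem fun n => box_digits x n ▸ mem_ico_boxOf x n

lemma digits_mem_cylinder {α : ℕ → ℕ} {x : ℝ} :
    ∀ {n}, x ∈ ico (box α n) → digits x ∈ cylinder α (n + 1)
  | 0, hx => by simpa [digits] using mem_ico_root_iff.1 hx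
  | n + 1, hx => by
    have hprev := digits_mem_cylinder (ico_box_succ_subset α n hx)
    have hbox : boxOf x n = box α n := by rw [← box_digits, box_eq_of_mem_cylinder hprev]
    intro i hi
    rcases Nat.lt_succ_iff_lt_or_eq.1 hi with hi | rfl
    · exact hprev i hi
    · rw [digits, hbox, ← mem_ico_piece_iff (hbox ▸ mem_ico_boxOf x n)]
      exact hx

lemma digits_limit (α : ℕ → ℕ) : digits (limit α) = α :=
  funext fun n => digits_mem_cylinder (limit_mem_ico_box α n) n n.lt_succ_self

lemma bijective_limit : Bijective limit :=
  ⟨LeftInverse.injective digits_limit, RightInverse.surjective limit_digits⟩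

lemma image_limit_cylinder (α : ℕ → ℕ) (n : ℕ) : limit '' cylinder α (n + 1) = ico (box α n) := by
  refine Subset.antisymm ?_ fun x hx => ⟨digits x, digits_mem_cylinder hx, limit_digits x⟩
  rintro _ ⟨β, hβ, rfl⟩
  exact box_eq_of_mem_cylinder hβ ▸ limit_mem_ico_box β n

end BaireReal

section transpose

variable {ι : Type*} (e : ℕ ≃ (ι → ℕ))

def baireEquivPi : (ℕ → ℕ) ≃ (ι → ℕ → ℕ) where
  toFun α i n := e (α n) i
  invFun β n := e.symm fun i => β i n
  left_inv α := by simp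
  right_inv β := by simp

lemma continuous_baireEquivPi : Continuous (baireEquivPi e) :=
  continuous_pi fun _ => continuous_pi fun n =>
    (continuous_of_discreteTopology (f := fun k => e k _)).comp (continuous_apply n)

lemma image_baireEquivPi_cylinder (α : ℕ → ℕ) (n : ℕ) :
    baireEquivPi e '' cylinder α n = univ.pi fun i => cylinder (baireEquivPi e α i) n := by
  ext β
  rw [Equiv.image_eq_preimage_symm]
  simp only [mem_preimage, mem_cylinder_iff, mem_univ_pi, baireEquivPi, Equiv.coe_fn_symm_mk,
    Equiv.coe_fn_mk, Equiv.symm_apply_eq, funext_iff]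
  exact ⟨fun h i k hk => h k hk i, fun h k hk i => h i k hk⟩

end transpose

lemma setOf_map_range_eq (u : List ℕ) :
    {α : ℕ → ℕ | (List.range u.length).map α = u} = cylinder (u.getD · 0) u.length := by
  ext α
  simp only [mem_ofPred_eq, mem_cylinder_iff, List.ext_getElem_iff, List.length_map,
    List.length_range, List.getElem_map, List.getElem_range, true_and]
  exact forall₂_congr fun i hi => by simp [hi]

/-- For every `N ≥ 1` there is a continuous bijection `π : ℕ^ℕ → ℝ^N` mapping every
cylinder `N_u` (for `u ≠ ∅`) onto a product of `N` half-open intervals with rational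
endpoints. -/
theorem exists_continuous_bijection_baire_to_euclidean (N : ℕ) (hN : 1 ≤ N) :
    ∃ π : (ℕ → ℕ) → (Fin N → ℝ), Continuous π ∧ Function.Bijective π ∧
      ∀ u : List ℕ, u ≠ [] →
        ∃ p q : Fin N → ℚ,
          π '' {α : ℕ → ℕ | (List.range u.length).map α = u} =
            Set.univ.pi (fun i : Fin N => Set.Ico (p i : ℝ) (q i : ℝ)) := by
  have : Nonempty (Fin N) := Fin.pos_iff_nonempty.mp hN
  obtain ⟨e⟩ := nonempty_equiv_of_countable (α := ℕ) (β := Fin N → ℕ)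
  refine ⟨Pi.map (fun _ => BaireReal.limit) ∘ baireEquivPi e,
    (Continuous.piMap fun _ => BaireReal.continuous_limit).comp (continuous_baireEquivPi e),
    (Bijective.piMap fun _ => BaireReal.bijective_limit).comp (baireEquivPi e).bijective,
    fun u hu => ?_⟩
  obtain ⟨n, hn⟩ := Nat.exists_eq_succ_of_ne_zero (List.length_pos_iff.2 hu).ne'
  set b := fun i => BaireReal.box (baireEquivPi e (u.getD · 0) i) n
  refine ⟨fun i => (b i).1, fun i => (b i).2, ?_⟩
  rw [setOf_map_range_eq, hn, image_comp, image_baireEquivPi_cylinder, piMap_image_univ_pi]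
  simp_rw [BaireReal.image_limit_cylinder]
  rfl
end

section
/- Let N ≥ 1, let (U_k)_{k∈ℕ} be an enumeration of the open balls in ℝ^N (with respect to the maximum norm) with centers in a fixed countable dense subset of ℝ^N and positive rational radii, and for β ∈ ℕ^ℕ set F(β) = ℝ^N ∖ ⋃_{n∈ℕ} U_{β(n)}. Then the function g(β, x) = dist(x, F(β)) is lower semicontinuous at every point of the set {(β, x) : F(β) is compact and nonempty}: for every a ∈ ℝ and every (β, x) with F(β) compact nonempty and dist(x, F(β)) > a, there is an open neighborhood V of (β, x) in ℕ^ℕ × ℝ^N such that dist(z, F(γ)) > a for all (γ, z) ∈ V with F(γ) ≠ ∅. -/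
/-!
Choose `a < a' < dist(x, F β)`. The compact ball `closedBall x a'` lies in `⋃ n, U (β n)`, so
finitely many of these balls, `U (β n)` for `n ∈ t`, already cover it. Every `γ` agreeing with
`β` on `t` and every `z` with `dist z x < a' - a` then have `closedBall z a ⊆ closedBall x a'`
inside `⋃ n, U (γ n)`, which keeps the closed set `F γ` at distance more than `a` from `z`.
-/

open Metric Set

section

variable {X : Type*} [PseudoMetricSpace X]

theorem lt_infDist_of_closedBall_subset_compl [ProperSpace X] {F : Set X} {z : X} {a : ℝ}
    (hF : IsClosed F) (hne : F.Nonempty) (h : closedBall z a ⊆ Fᶜ) : a < infDist z F := by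
  obtain ⟨y, hyF, hy⟩ := hF.exists_infDist_eq_dist hne z
  by_contra! hle
  exact h (mem_closedBall'.mpr (hy ▸ hle)) hyF

theorem closedBall_subset_iUnion_of_lt_infDist_compl {ι : Sort*} {U : ι → Set X} {x : X}
    {r : ℝ} (hr : r < infDist x (⋃ i, U i)ᶜ) : closedBall x r ⊆ ⋃ i, U i := by
  simpa using (closedBall_subset_ball hr).trans (ball_infDist_subset_compl (s := (⋃ i, U i)ᶜ))

theorem exists_isOpen_forall_lt_infDist_compl_iUnion [ProperSpace X] {κ ι : Type*}
    [TopologicalSpace ι] [DiscreteTopology ι] {U : ι → Set X} (hU : ∀ i, IsOpen (U i))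
    {β : κ → ι} {x : X} {a : ℝ} (ha : a < infDist x (⋃ n, U (β n))ᶜ) :
    ∃ V : Set ((κ → ι) × X), IsOpen V ∧ (β, x) ∈ V ∧
      ∀ γ z, (γ, z) ∈ V → ((⋃ n, U (γ n))ᶜ).Nonempty → a < infDist z (⋃ n, U (γ n))ᶜ := by
  obtain ⟨a', haa', ha'⟩ := exists_between ha
  obtain ⟨t, ht⟩ := (isCompact_closedBall x a').elim_finite_subcover (fun n => U (β n))
    (fun n => hU (β n)) (closedBall_subset_iUnion_of_lt_infDist_compl ha')
  refine ⟨(t : Set κ).pi (fun n => {β n}) ×ˢ ball x (a' - a),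
    (isOpen_set_pi t.finite_toSet fun _ _ => isOpen_discrete _).prod isOpen_ball,
    ⟨fun _ _ => rfl, mem_ball_self (sub_pos.mpr haa')⟩, ?_⟩
  rintro γ z ⟨hγ, hz⟩ hne
  refine lt_infDist_of_closedBall_subset_compl
    (isOpen_iUnion fun n => hU (γ n)).isClosed_compl hne ?_
  have hball : closedBall z a ⊆ closedBall x a' :=
    closedBall_subset_closedBall' (by linarith [mem_ball.mp hz])
  intro y hy
  obtain ⟨n, hn, hyn⟩ := mem_iUnion₂.mp (ht (hball hy))
  rw [← mem_singleton_iff.mp (hγ n hn)] at hyn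
  simpa using ⟨n, hyn⟩

end

theorem infDist_compl_union_balls_lowerSemicontinuous_general (N : ℕ)
    (D : ℕ → (Fin N → ℝ))
    (U : ℕ → Set (Fin N → ℝ))
    (hU : ∀ k, ∃ (i : ℕ) (r : ℚ), 0 < r ∧ U k = Metric.ball (D i) (r : ℝ))
    (a : ℝ) (β : ℕ → ℕ) (x : Fin N → ℝ)
    (ha : a < Metric.infDist x ((⋃ n, U (β n))ᶜ)) :
    ∃ V : Set ((ℕ → ℕ) × (Fin N → ℝ)), IsOpen V ∧ (β, x) ∈ V ∧
      ∀ (γ : ℕ → ℕ) (z : Fin N → ℝ), (γ, z) ∈ V →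
        ((⋃ n, U (γ n))ᶜ : Set (Fin N → ℝ)).Nonempty →
        a < Metric.infDist z ((⋃ n, U (γ n))ᶜ) := by
  have hUopen : ∀ k, IsOpen (U k) := fun k => by
    obtain ⟨i, r, -, hk⟩ := hU k
    exact hk ▸ isOpen_ball
  exact exists_isOpen_forall_lt_infDist_compl_iUnion hUopen ha

/-- Let `(U k)` enumerate the open balls of `ℝ^N` (with the maximum norm) with centers in a
fixed countable dense set and positive rational radii, and for `β ∈ ℕ^ℕ` let
`F β = ℝ^N ∖ ⋃ n, U (β n)`. Then `(β, x) ↦ dist(x, F β)` is lower semicontinuous at every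
point where `F β` is compact and nonempty: if `dist(x, F β) > a` then on a neighborhood `V`
of `(β, x)` we have `dist(z, F γ) > a` for all `(γ, z) ∈ V` with `F γ ≠ ∅`. -/
theorem infDist_compl_union_balls_lowerSemicontinuous (N : ℕ) (hN : 1 ≤ N)
    (D : ℕ → (Fin N → ℝ)) (hD : DenseRange D)
    (U : ℕ → Set (Fin N → ℝ))
    (hU : ∀ k, ∃ (i : ℕ) (r : ℚ), 0 < r ∧ U k = Metric.ball (D i) (r : ℝ))
    (hU' : ∀ (i : ℕ) (r : ℚ), 0 < r → ∃ k, U k = Metric.ball (D i) (r : ℝ))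
    (a : ℝ) (β : ℕ → ℕ) (x : Fin N → ℝ)
    (hcomp : IsCompact ((⋃ n, U (β n))ᶜ))
    (hne : ((⋃ n, U (β n))ᶜ : Set (Fin N → ℝ)).Nonempty)
    (ha : a < Metric.infDist x ((⋃ n, U (β n))ᶜ)) :
    ∃ V : Set ((ℕ → ℕ) × (Fin N → ℝ)), IsOpen V ∧ (β, x) ∈ V ∧
      ∀ (γ : ℕ → ℕ) (z : Fin N → ℝ), (γ, z) ∈ V →
        ((⋃ n, U (γ n))ᶜ : Set (Fin N → ℝ)).Nonempty →
        a < Metric.infDist z ((⋃ n, U (γ n))ᶜ) :=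
  infDist_compl_union_balls_lowerSemicontinuous_general N D U hU a β x ha
end
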